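/- Let δ_i > 0 and 0 < ε < δ_i, and let g_{i,ε} : ℝ → ℝ be defined by g_{i,ε}(s) = 0 if |s| ≤ δ_i − ε, g_{i,ε}(s) = (1/(12ε))·(|s| − δ_i + ε)³ if δ_i − ε ≤ |s| ≤ δ_i + ε, and g_{i,ε}(s) = ε²/6 + (1/2)·(|s| − δ_i)² if |s| ≥ δ_i + ε. Set g_i(s) = (1/2)·(|s| − δ_i)₊². Then for every s ∈ ℝ one has |g_{i,ε}(s) − g_i(s)| ≤ ε²/6 and |g_{i,ε}'(s) − g_i'(s)| ≤ ε/4, where g_i'(s) = (|s| − δ_i)₊ · sign(s). -/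

import Mathlib

/-!
Write `u = |s| - δᵢ`. Then `g_{i,ε}(s)` is a profile in `|s|` obtained by gluing `0`, the cubic
`(u + ε)³ / (12ε)` and `ε²/6 + u²/2` at `u = ∓ε`, where values and slopes match, so it is
differentiable away from `0` with derivative `profile'(|s|) · sign s`. At `s = 0` the
derivative vanishes because `g_{i,ε}` is even. On the transition layer `|u| ≤ ε` the two
errors are explicit:
`(u + ε)³ / (12ε)` and `(u + ε)² / (4ε)` for `u ≤ 0`, and
`((u - ε)³ + 2ε³) / (12ε)` and `(u - ε)² / (4ε)` for `u ≥ 0`,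
which lie in `[0, ε²/6]` and `[0, ε/4]` respectively.
-/

open Set

/-- The piecewise-defined `C²` regularization `g_{i,ε}` of `s ↦ (1/2)(|s| − δᵢ)₊²`. -/
noncomputable def greg (δi ε s : ℝ) : ℝ :=
  if |s| ≤ δi - ε then 0
  else if |s| ≤ δi + ε then 1 / (12 * ε) * (|s| - δi + ε) ^ 3
  else ε ^ 2 / 6 + 1 / 2 * (|s| - δi) ^ 2

theorem Function.Even.deriv_zero {F : Type*} [NormedAddCommGroup F] [NormedSpace ℝ F]
    {f : ℝ → F} (hf : Function.Even f) : deriv f 0 = 0 := by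
  have h := deriv_comp_neg f (0 : ℝ)
  rw [funext hf, neg_zero] at h
  have h2 : (2 : ℝ) • deriv f 0 = 0 := by
    rw [two_smul]
    nth_rw 1 [h]
    exact neg_add_cancel _
  simpa using h2

theorem Real.abs_sign_le_one (x : ℝ) : |Real.sign x| ≤ 1 := by
  rcases Real.sign_apply_eq x with h | h | h <;> simp [h]

theorem hasDerivAt_ite_le {F : Type*} [NormedAddCommGroup F] [NormedSpace ℝ F]
    {g h g' h' : ℝ → F} {c : ℝ} (hg : ∀ x, HasDerivAt g (g' x) x)
    (hh : ∀ x, HasDerivAt h (h' x) x) (hc : g c = h c) (hc' : g' c = h' c) (x : ℝ) :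
    HasDerivAt (fun y ↦ if y ≤ c then g y else h y) (if x ≤ c then g' x else h' x) x := by
  rcases lt_trichotomy x c with hx | rfl | hx
  · rw [if_pos hx.le]
    exact (hg x).congr_of_eventuallyEq <|
      (eventually_le_nhds hx).mono fun y hy ↦ if_pos hy
  · rw [if_pos le_rfl]
    have hleft : HasDerivWithinAt (fun y ↦ if y ≤ x then g y else h y) (g' x) (Iic x) x :=
      (hg x).hasDerivWithinAt.congr (fun y hy ↦ if_pos hy) (if_pos le_rfl)
    have hright : HasDerivWithinAt (fun y ↦ if y ≤ x then g y else h y) (g' x) (Ici x) x := by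
      refine hc' ▸ (hh x).hasDerivWithinAt.congr (fun y hy ↦ ?_) (by simp [hc])
      split_ifs with hyx
      · rw [le_antisymm hyx hy, hc]
      · rfl
    simpa only [Iic_union_Ici, hasDerivWithinAt_univ] using hleft.union hright
  · rw [if_neg hx.not_ge]
    exact (hh x).congr_of_eventuallyEq <|
      (eventually_gt_nhds hx).mono fun y hy ↦ if_neg hy.not_ge

noncomputable def gregProfile (δ ε t : ℝ) : ℝ :=
  if t ≤ δ - ε then 0
  else if t ≤ δ + ε then 1 / (12 * ε) * (t - δ + ε) ^ 3
  else ε ^ 2 / 6 + 1 / 2 * (t - δ) ^ 2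

noncomputable def gregProfileDeriv (δ ε t : ℝ) : ℝ :=
  if t ≤ δ - ε then 0
  else if t ≤ δ + ε then 1 / (4 * ε) * (t - δ + ε) ^ 2
  else t - δ

section Profile

variable {δ ε : ℝ}

theorem hasDerivAt_gregProfile (hε : 0 < ε) (t : ℝ) :
    HasDerivAt (gregProfile δ ε) (gregProfileDeriv δ ε t) t := by
  have hcubic (x : ℝ) : HasDerivAt (fun y ↦ 1 / (12 * ε) * (y - δ + ε) ^ 3)
      (1 / (4 * ε) * (x - δ + ε) ^ 2) x := by
    refine (((((hasDerivAt_id' x).sub_const δ).add_const ε).pow 3).const_mul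
      (1 / (12 * ε))).congr_deriv ?_
    field_simp
    ring
  have hquad (x : ℝ) : HasDerivAt (fun y ↦ ε ^ 2 / 6 + 1 / 2 * (y - δ) ^ 2) (x - δ) x := by
    refine (((((hasDerivAt_id' x).sub_const δ).pow 2).const_mul (1 / 2)).const_add
      (ε ^ 2 / 6)).congr_deriv ?_
    simp
  have hupper := hasDerivAt_ite_le hcubic hquad (c := δ + ε)
    (by field_simp; ring) (by field_simp; ring)
  have hle : δ - ε ≤ δ + ε := by linarith
  exact hasDerivAt_ite_le (fun x ↦ hasDerivAt_const x 0) hupper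
    (by simp [hle]) (by simp [hle]) t

theorem hasDerivAt_greg (hε : 0 < ε) {s : ℝ} (hs : s ≠ 0) :
    HasDerivAt (greg δ ε) (gregProfileDeriv δ ε |s| * Real.sign s) s := by
  have hsign : (SignType.sign s : ℝ) = Real.sign s := by
    rcases hs.lt_or_gt with h | h <;> simp [h, Real.sign_of_neg, Real.sign_of_pos]
  rw [← hsign]
  exact (hasDerivAt_gregProfile hε |s|).comp s (hasDerivAt_abs hs)

theorem deriv_greg_zero : deriv (greg δ ε) 0 = 0 :=
  Function.Even.deriv_zero fun s ↦ by simp only [greg, abs_neg]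

theorem abs_gregProfile_sub_le (hε : 0 < ε) (t : ℝ) :
    |gregProfile δ ε t - 1 / 2 * max (t - δ) 0 ^ 2| ≤ ε ^ 2 / 6 := by
  unfold gregProfile
  set u := t - δ
  split_ifs with hlo hhi
  · rw [max_eq_right (by linarith)]
    simpa using by positivity
  · have hu : -ε ≤ u ∧ u ≤ ε := ⟨by linarith, by linarith⟩
    rcases le_total u 0 with hneg | hpos
    · have key :
          1 / (12 * ε) * (u + ε) ^ 3 - 1 / 2 * max u 0 ^ 2 = (u + ε) ^ 3 / (12 * ε) := by
        rw [max_eq_right hneg]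
        ring
      have hcube : (u + ε) ^ 3 ≤ ε ^ 3 := pow_le_pow_left₀ (by linarith) (by linarith) 3
      rw [key, abs_of_nonneg (div_nonneg (pow_nonneg (by linarith) 3) (by positivity)),
        div_le_iff₀ (by positivity)]
      linarith [pow_pos hε 3]
    · have key : 1 / (12 * ε) * (u + ε) ^ 3 - 1 / 2 * max u 0 ^ 2 =
          ((u - ε) ^ 3 + 2 * ε ^ 3) / (12 * ε) := by
        rw [max_eq_left hpos]
        field_simp
        ring
      have hcube : (-ε) ^ 3 ≤ (u - ε) ^ 3 ∧ (u - ε) ^ 3 ≤ 0 :=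
        ⟨(Odd.pow_le_pow (by decide)).2 (by linarith),
          (Odd.pow_nonpos_iff (by decide)).2 (by linarith)⟩
      rw [key, abs_of_nonneg (div_nonneg (by linarith) (by positivity)),
        div_le_iff₀ (by positivity)]
      linarith
  · rw [max_eq_left (by linarith), add_sub_cancel_right, abs_of_nonneg (by positivity)]

theorem abs_gregProfileDeriv_sub_le (hε : 0 < ε) (t : ℝ) :
    |gregProfileDeriv δ ε t - max (t - δ) 0| ≤ ε / 4 := by
  unfold gregProfileDeriv
  set u := t - δ
  split_ifs with hlo hhi
  · rw [max_eq_right (by linarith)]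
    simpa using by positivity
  · have hu : -ε ≤ u ∧ u ≤ ε := ⟨by linarith, by linarith⟩
    rcases le_total u 0 with hneg | hpos
    · have key : 1 / (4 * ε) * (u + ε) ^ 2 - max u 0 = (u + ε) ^ 2 / (4 * ε) := by
        rw [max_eq_right hneg]
        ring
      rw [key, abs_of_nonneg (by positivity), div_le_iff₀ (by positivity)]
      nlinarith
    · have key : 1 / (4 * ε) * (u + ε) ^ 2 - max u 0 = (u - ε) ^ 2 / (4 * ε) := by
        rw [max_eq_left hpos]
        field_simp
        ring
      rw [key, abs_of_nonneg (by positivity), div_le_iff₀ (by positivity)]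
      nlinarith
  · rw [max_eq_left (by linarith), sub_self, abs_zero]
    positivity

end Profile

theorem stmt7_general (δi ε : ℝ) (hε : 0 < ε) :
    (∀ s : ℝ, |greg δi ε s - 1 / 2 * (max (|s| - δi) 0) ^ 2| ≤ ε ^ 2 / 6) ∧
      (∀ s : ℝ, |deriv (greg δi ε) s - max (|s| - δi) 0 * Real.sign s| ≤ ε / 4) := by
  refine ⟨fun s ↦ abs_gregProfile_sub_le hε |s|, fun s ↦ ?_⟩
  rcases eq_or_ne s 0 with rfl | hs
  · simpa [deriv_greg_zero] using by positivity
  rw [(hasDerivAt_greg hε hs).deriv, ← sub_mul, abs_mul]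
  calc _ ≤ ε / 4 * 1 :=
        mul_le_mul (abs_gregProfileDeriv_sub_le hε |s|) (Real.abs_sign_le_one s)
          (abs_nonneg _) (by positivity)
    _ = ε / 4 := mul_one _

/-- Let `δᵢ > 0` and `0 < ε < δᵢ`, and set `g_i(s) = (1/2)(|s| − δᵢ)₊²`. Then for every
`s ∈ ℝ` one has `|g_{i,ε}(s) − g_i(s)| ≤ ε²/6` and `|g_{i,ε}'(s) − g_i'(s)| ≤ ε/4`,
where `g_i'(s) = (|s| − δᵢ)₊ · sign(s)`. -/
theorem stmt7 (δi ε : ℝ) (hδ : 0 < δi) (hε : 0 < ε) (hεδ : ε < δi) :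
    (∀ s : ℝ, |greg δi ε s - 1 / 2 * (max (|s| - δi) 0) ^ 2| ≤ ε ^ 2 / 6) ∧
      (∀ s : ℝ, |deriv (greg δi ε) s - max (|s| - δi) 0 * Real.sign s| ≤ ε / 4) :=
  stmt7_general δi ε hε
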